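/- Let 𝒱 be the category of ℤ×ℕ-graded 𝕜-modules and let X ∈ Ob 𝒱 satisfy X^p_0 = 0 for all p ∈ ℤ. Then the homotopy coalgebra morphism e : XT → X T̃, defined by e(I)·pr_n = (⊗^{i∈I} pr_{n_i})·λ^{⊔_i n_i → I} for n ∈ ℕ^I, is an isomorphism of homotopy coalgebras. -/

import Mathlib

/-!
Statement 17: Let `𝒱` be the category of `ℤ×ℕ`-graded `𝕜`-modules and `X ∈ Ob 𝒱` with
`X^p_0 = 0` for all `p`.  Then the canonical homotopy coalgebra morphism `e : XT → X T̃`,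
defined by `e(I)·pr_n = (⊗ᵢ pr_{nᵢ})·λ^{⊔ᵢnᵢ→I}`, is an isomorphism of homotopy coalgebras.

The `ℤ×ℕ`-graded structure of `𝒱` is encoded by the structure `Bigraded`: a family of
corepresenting objects `gen p i` (the free modules `𝕜⟨p,i⟩`, so that `X^p_i = 𝒱(gen p i, X)`)
which jointly detect isomorphisms, such that a tensor product of `n` objects with vanishing
weight-`0` components has vanishing components in weights `< n`, and such that the components
of `XT^{⊗I}` are the direct sums of the components of its summands.  `X^p_0 = 0` is the
statement that `𝒱(gen p 0, X) = 0`.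
-/


open CategoryTheory Category Limits

universe v u

namespace Paper

/-- The number of elements of the fiber `φ⁻¹(j)` of a monotone map of finite ordinals. -/
def fiberCard {I J : ℕ} (φ : Fin I →o Fin J) (j : Fin J) : ℕ :=
  (Finset.univ.filter fun i => φ i = j).card

/-- The monotone enumeration of the fiber `φ⁻¹(j)`. -/
noncomputable def fiberEmb {I J : ℕ} (φ : Fin I →o Fin J) (j : Fin J)
    (p : Fin (fiberCard φ j)) : Fin I :=
  (((Finset.univ.filter fun i => φ i = j).orderIsoOfFin rfl) p).1

/-- `ψ` is the monotone map `⊔ᵢ nᵢ → I` sending the `i`-th block (of size `nᵢ`) to `i`;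
a monotone map is uniquely determined by its fiber cardinalities. -/
def IsBlockMap {I : ℕ} (n : Fin I → ℕ) (ψ : Fin (∑ i, n i) →o Fin I) : Prop :=
  ∀ i, fiberCard ψ i = n i

/-- The push-forward `φ_* k` of a multi-index: `(φ_* k)_j = ∑_{i ∈ φ⁻¹ j} k_i`. -/
noncomputable def pushf {I J : ℕ} (φ : Fin I →o Fin J) (k : Fin I → ℕ) (j : Fin J) : ℕ :=
  ∑ p, k (fiberEmb φ j p)

variable (V : Type u) [Category.{v} V]

/-- The data of a (strict) colax Monoidal structure on `V`: unbiased tensor products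
`⊗^{i∈I} Xᵢ` of finite families, and structure morphisms
`λ^φ : ⊗^{j∈J} ⊗^{i∈φ⁻¹j} Xᵢ ⟶ ⊗^{i∈I} Xᵢ` for monotone `φ : I → J`. -/
structure ColaxSetting where
  tens : ∀ {n : ℕ}, (Fin n → V) → V
  tensHom : ∀ {n : ℕ} {X Y : Fin n → V}, (∀ i, X i ⟶ Y i) → (tens X ⟶ tens Y)
  tensHom_id : ∀ {n : ℕ} (X : Fin n → V), tensHom (fun i => 𝟙 (X i)) = 𝟙 (tens X)
  tensHom_comp : ∀ {n : ℕ} {X Y Z : Fin n → V} (f : ∀ i, X i ⟶ Y i) (g : ∀ i, Y i ⟶ Z i),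
      tensHom (fun i => f i ≫ g i) = tensHom f ≫ tensHom g
  tens_single : ∀ (X : Fin 1 → V), tens X = X 0
  lam : ∀ {I J : ℕ} (φ : Fin I →o Fin J) (X : Fin I → V),
      tens (fun j => tens (fun p => X (fiberEmb φ j p))) ⟶ tens X
  lam_natural : ∀ {I J : ℕ} (φ : Fin I →o Fin J) {X Y : Fin I → V} (f : ∀ i, X i ⟶ Y i),
      tensHom (fun j => tensHom (fun p => f (fiberEmb φ j p))) ≫ lam φ Y
        = lam φ X ≫ tensHom f

variable {V}

/-- Tensor powers `X^{⊗n}`. -/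
def ColaxSetting.pow (S : ColaxSetting V) (X : V) (n : ℕ) : V := S.tens (fun _ : Fin n => X)

theorem ColaxSetting.pow_eq (S : ColaxSetting V) (X : V) {c d : ℕ} (h : c = d) :
    S.pow X c = S.pow X d := by subst h; rfl

/-- When all structure morphisms `λ^φ` are invertible, `(V, ⊗, λ)` is Monoidal
(rather than merely colax Monoidal). -/
structure ColaxSetting.Monoidal (S : ColaxSetting V) where
  lamInv : ∀ {I J : ℕ} (φ : Fin I →o Fin J) (X : Fin I → V),
      S.tens X ⟶ S.tens (fun j => S.tens (fun p => X (fiberEmb φ j p)))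
  lam_lamInv : ∀ {I J : ℕ} (φ : Fin I →o Fin J) (X : Fin I → V),
      S.lam φ X ≫ lamInv φ X = 𝟙 _
  lamInv_lam : ∀ {I J : ℕ} (φ : Fin I →o Fin J) (X : Fin I → V),
      lamInv φ X ≫ S.lam φ X = 𝟙 _

/-- A homotopy coalgebra (= homotopy comonoid) in `V`: a lax Monoidal functor
`(O_sk^op, ⊔, id) → (V, ⊗, λ)`, unbiasedly unpacked. -/
structure HCoalgebra (S : ColaxSetting V) where
  obj : ℕ → V
  /-- the action of `C` on `φ^op` for a monotone map `φ : I → J` -/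
  map : ∀ {I J : ℕ}, (Fin I →o Fin J) → (obj J ⟶ obj I)
  map_id : ∀ I : ℕ, map (OrderHom.id (α := Fin I)) = 𝟙 (obj I)
  map_comp : ∀ {I J K : ℕ} (φ : Fin I →o Fin J) (ψ : Fin J →o Fin K),
      map (ψ.comp φ) = map ψ ≫ map φ
  /-- the lax Monoidal structure `χ^I_{N₁,…,N_I}` -/
  chi : ∀ {I : ℕ} (N : Fin I → ℕ), S.tens (fun i => obj (N i)) ⟶ obj (∑ i, N i)
  chi_one : ∀ (N : Fin 1 → ℕ) (h : S.tens (fun i => obj (N i)) = obj (∑ i, N i)),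
      chi N = eqToHom h
  /-- naturality of `χ^I` in its arguments; `Φ = ⊔ᵢ φᵢ` is the block sum of the `φᵢ`,
  characterized by preserving blocks and acting as `φᵢ` on the `i`-th block. -/
  chi_natural : ∀ {I : ℕ} {M N : Fin I → ℕ} (φ : ∀ i, Fin (M i) →o Fin (N i))
      (Φ : Fin (∑ i, M i) →o Fin (∑ i, N i))
      (ψM : Fin (∑ i, M i) →o Fin I) (hM : IsBlockMap M ψM)
      (ψN : Fin (∑ i, N i) →o Fin I) (hN : IsBlockMap N ψN)
      (_ : ∀ q, ψN (Φ q) = ψM q)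
      (_ : ∀ (i : Fin I) (p : Fin (fiberCard ψM i)),
        Φ (fiberEmb ψM i p) = fiberEmb ψN i (Fin.cast (hN i).symm (φ i (Fin.cast (hM i) p)))),
      S.tensHom (fun i => map (φ i)) ≫ chi M = chi N ≫ map Φ
  /-- compatibility of `χ` with the colax structure of `V` (diagram (2φ-1φ)). -/
  chi_assoc : ∀ {I J : ℕ} (φ : Fin I →o Fin J) (N : Fin I → ℕ)
      (h : obj (∑ j, ∑ p, N (fiberEmb φ j p)) = obj (∑ i, N i)),
      S.tensHom (fun j => chi (fun p => N (fiberEmb φ j p)))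
          ≫ chi (fun j => ∑ p, N (fiberEmb φ j p)) ≫ eqToHom h
        = S.lam φ (fun i => obj (N i)) ≫ chi N

/-- Morphisms of homotopy coalgebras: Monoidal transformations of lax Monoidal functors. -/
@[ext]
structure HCoalgHom {S : ColaxSetting V} (C G : HCoalgebra S) where
  app : ∀ n : ℕ, C.obj n ⟶ G.obj n
  naturality : ∀ {I J : ℕ} (φ : Fin I →o Fin J),
      app J ≫ G.map φ = C.map φ ≫ app I
  monoidality : ∀ {I : ℕ} (N : Fin I → ℕ),
      S.tensHom (fun i => app (N i)) ≫ G.chi N = C.chi N ≫ app (∑ i, N i)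

/-- The category `hCoalg` of homotopy coalgebras. -/
instance hCoalgCategory (S : ColaxSetting V) : Category (HCoalgebra S) where
  Hom := HCoalgHom
  id C := { app := fun n => 𝟙 _
            naturality := by intros; simp
            monoidality := by intros; rw [S.tensHom_id]; simp }
  comp {C G H} f g :=
    { app := fun n => f.app n ≫ g.app n
      naturality := by
        intro I J φ
        rw [assoc, g.naturality, ← assoc, f.naturality, assoc]
      monoidality := by
        intro I N
        rw [S.tensHom_comp, assoc, g.monoidality, ← assoc, f.monoidality, assoc] }
  id_comp f := by apply HCoalgHom.ext; funext n; simp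
  comp_id f := by apply HCoalgHom.ext; funext n; simp
  assoc f g h := by apply HCoalgHom.ext; funext n; simp

@[simp] theorem hc_id_app {S : ColaxSetting V} (C : HCoalgebra S) (n : ℕ) :
    HCoalgHom.app (𝟙 C) n = 𝟙 (C.obj n) := rfl

@[simp] theorem hc_comp_app {S : ColaxSetting V} {C G H : HCoalgebra S}
    (f : C ⟶ G) (g : G ⟶ H) (n : ℕ) :
    HCoalgHom.app (f ≫ g) n = HCoalgHom.app f n ≫ HCoalgHom.app g n := rfl

/-- An ordinary coalgebra in `V`: an object with compatible comultiplications `Δ_I`. -/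
structure OrdCoalgebra (S : ColaxSetting V) where
  pt : V
  delta : ∀ I : ℕ, pt ⟶ S.tens (fun _ : Fin I => pt)
  delta_one : ∀ h : pt = S.tens (fun _ : Fin 1 => pt), delta 1 = eqToHom h
  delta_comp : ∀ {I J : ℕ} (φ : Fin I →o Fin J),
      delta I = delta J ≫ S.tensHom (fun j => delta (fiberCard φ j)) ≫ S.lam φ (fun _ => pt)

/-- Morphisms of ordinary coalgebras. -/
structure OrdCoalgHom {S : ColaxSetting V} (C D : OrdCoalgebra S) where
  f : C.pt ⟶ D.pt
  compat : ∀ I : ℕ, f ≫ D.delta I = C.delta I ≫ S.tensHom (fun _ => f)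

/-- `CH` is the homotopy coalgebra induced by the ordinary coalgebra `C`
(Proposition 2.27: `C(J) = C^{⊗J}`, `C(φ^op) = (⊗_j Δ_{φ⁻¹j})·λ^φ`, `χ^I = λ^ψ`). -/
structure Induced {S : ColaxSetting V} (C : OrdCoalgebra S) (CH : HCoalgebra S) where
  hobj : ∀ I : ℕ, CH.obj I = S.tens (fun _ : Fin I => C.pt)
  obj1 : CH.obj 1 = C.pt
  map_eq : ∀ {I J : ℕ} (φ : Fin I →o Fin J),
      CH.map φ = eqToHom (hobj J) ≫ S.tensHom (fun j => C.delta (fiberCard φ j))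
        ≫ S.lam φ (fun _ => C.pt) ≫ eqToHom (hobj I).symm
  chi_eq : ∀ {I : ℕ} (N : Fin I → ℕ) (ψ : Fin (∑ i, N i) →o Fin I) (_ : IsBlockMap N ψ)
      (h1 : S.tens (fun i => CH.obj (N i))
          = S.tens (fun i => S.tens (fun _ : Fin (fiberCard ψ i) => C.pt))),
      CH.chi N = eqToHom h1 ≫ S.lam ψ (fun _ => C.pt) ≫ eqToHom (hobj (∑ i, N i)).symm

/-- The relatively cofree homotopy coalgebra `X T̃`, characterized by
`X T̃(I) = ∏_{n ∈ ℕ^I} X^{⊗‖n‖}` together with the formulas for the structure maps. -/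
structure TildeStr (S : ColaxSetting V) (X : V) where
  T : HCoalgebra S
  /-- the projection `pr_n : X T̃(I) ⟶ X^{⊗‖n‖}` -/
  pr : ∀ {I : ℕ} (n : Fin I → ℕ), T.obj I ⟶ S.pow X (∑ i, n i)
  /-- `X T̃(I)` is the product of the `X^{⊗‖n‖}`. -/
  pr_univ : ∀ {I : ℕ} {W : V} (f : ∀ n : Fin I → ℕ, W ⟶ S.pow X (∑ i, n i)),
      ∃! u : W ⟶ T.obj I, ∀ n, u ≫ pr n = f n
  /-- `X T̃(φ^op) ≫ pr_n = pr_{φ_* n}`. -/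
  map_pr : ∀ {I J : ℕ} (φ : Fin I →o Fin J) (n : Fin I → ℕ)
      (h : S.pow X (∑ j, pushf φ n j) = S.pow X (∑ i, n i)),
      T.map φ ≫ pr n = pr (pushf φ n) ≫ eqToHom h
  /-- `χ^I_{N₁,…,N_I} ≫ pr_m = (⊗ᵢ pr_{nsᵢ}) ≫ λ^{ψ₂}` where `m = ns₁ ⊕ ⋯ ⊕ ns_I`. -/
  chi_pr : ∀ {I : ℕ} (N : Fin I → ℕ) (ns : ∀ i, Fin (N i) → ℕ) (m : Fin (∑ i, N i) → ℕ)
      (ψ : Fin (∑ i, N i) →o Fin I) (hψ : IsBlockMap N ψ)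
      (_ : ∀ (i : Fin I) (p : Fin (fiberCard ψ i)),
        m (fiberEmb ψ i p) = ns i (Fin.cast (hψ i) p))
      (ψ₂ : Fin (∑ i, ∑ p, ns i p) →o Fin I) (_ : IsBlockMap (fun i => ∑ p, ns i p) ψ₂)
      (h2 : S.tens (fun i => S.pow X (∑ p, ns i p))
          = S.tens (fun i => S.tens (fun _ : Fin (fiberCard ψ₂ i) => X)))
      (h3 : S.pow X (∑ i, ∑ p, ns i p) = S.pow X (∑ q, m q)),
      T.chi N ≫ pr m
        = S.tensHom (fun i => pr (ns i)) ≫ eqToHom h2 ≫ S.lam ψ₂ (fun _ => X) ≫ eqToHom h3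


/-- The tensor coalgebra object `XT = ⨿_k X^{⊗k}` together with its coproduct structure
and projections. -/
structure TensorObj (S : ColaxSetting V) (X : V) [Limits.HasZeroMorphisms V] where
  CT : V
  inj : ∀ k : ℕ, S.pow X k ⟶ CT
  desc : ∀ {W : V} (f : ∀ k : ℕ, S.pow X k ⟶ W), ∃! u : CT ⟶ W, ∀ k, inj k ≫ u = f k
  prk : ∀ k : ℕ, CT ⟶ S.pow X k
  inj_prk : ∀ k : ℕ, inj k ≫ prk k = 𝟙 (S.pow X k)
  inj_prk_ne : ∀ k m : ℕ, k ≠ m → inj k ≫ prk m = 0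

/-- The `ℤ×ℕ`-graded structure of the category of `ℤ×ℕ`-graded `𝕜`-modules, encoded through
a family of corepresenting objects (the free modules of rank one in each bidegree). -/
structure Bigraded (S : ColaxSetting V) [Limits.HasZeroMorphisms V] where
  gen : ℤ → ℕ → V
  /-- the `gen p i` jointly detect isomorphisms -/
  detect : ∀ {X Y : V} (u : X ⟶ Y),
      (∀ (p : ℤ) (i : ℕ), Function.Bijective (fun f : gen p i ⟶ X => f ≫ u)) → IsIso u
  /-- the second grading of a tensor product is the sum of the second gradings -/
  tens_supp : ∀ {n : ℕ} (Xs : Fin n → V),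
      (∀ (i : Fin n) (p : ℤ) (f : gen p 0 ⟶ Xs i), f = 0) →
      ∀ (p : ℤ) (j : ℕ), j < n → ∀ f : gen p j ⟶ S.tens Xs, f = 0

/-! Invertibility of `e(I)` is tested in each bidegree `(p, j)`. There `XT^{⊗I}` is the direct
sum of the `⊗ᵢ X^{⊗mᵢ}` and `X T̃(I)` the product of the `X^{⊗‖k‖}`, of which only the finitely
many with `‖k‖ ≤ j` are nonzero because `X` lives in positive weight. In these coordinates `e(I)`
is diagonal: the `(m, k)` entry is `⊗ᵢ (pr_{kᵢ} ∘ inj_{mᵢ})` followed by `λ^ψ`, which has a zero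
factor when `m ≠ k`, while the diagonal entries are the invertible `λ^ψ`. The componentwise
inverse of `e` is again a morphism of homotopy coalgebras. -/

theorem comp_bijective_of_diagonal {C : Type*} [Category C] [Preadditive C] {κ : Type*}
    {W A B : C} {T P : κ → C} (ι : ∀ m, T m ⟶ A) (π : ∀ k, B ⟶ P k) (u : A ⟶ B)
    (hπ : ∀ v v' : W ⟶ B, (∀ k, v ≫ π k = v' ≫ π k) → v = v')
    (hdiag : ∀ m, IsIso (ι m ≫ u ≫ π m))
    (hoff : ∀ m k, m ≠ k → ∀ g : W ⟶ T m, g ≫ ι m ≫ u ≫ π k = 0)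
    (hsum : ∀ f : W ⟶ A, ∃ (s : Finset κ) (g : ∀ m, W ⟶ T m), f = ∑ m ∈ s, g m ≫ ι m)
    (hfin : ∃ s : Finset κ, ∀ k ∉ s, ∀ f : W ⟶ P k, f = 0) :
    Function.Bijective (fun f : W ⟶ A => f ≫ u) := by
  classical
  constructor
  · refine (injective_iff_map_eq_zero (Preadditive.rightComp W u)).2 fun f hf => ?_
    obtain ⟨s, g, rfl⟩ := hsum f
    have hg : ∀ m ∈ s, g m = 0 := fun m hm => by
      have hfm : (∑ n ∈ s, g n ≫ ι n) ≫ u ≫ π m = 0 := by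
        rw [← assoc, show (∑ n ∈ s, g n ≫ ι n) ≫ u = 0 from hf, zero_comp]
      rw [Preadditive.sum_comp, Finset.sum_eq_single_of_mem m hm
        fun n _ hnm => by rw [assoc, hoff n m hnm]] at hfm
      simpa using hfm
    exact Finset.sum_eq_zero fun m hm => by rw [hg m hm, zero_comp]
  · intro v
    obtain ⟨s, hs⟩ := hfin
    refine ⟨∑ m ∈ s, (v ≫ π m ≫ inv (ι m ≫ u ≫ π m)) ≫ ι m, hπ _ _ fun k => ?_⟩
    have hterm : ∀ m ≠ k, ((v ≫ π m ≫ inv (ι m ≫ u ≫ π m)) ≫ ι m) ≫ u ≫ π k = 0 :=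
      fun m hmk => by rw [assoc, hoff m k hmk]
    simp only [Preadditive.sum_comp, assoc]
    by_cases hk : k ∈ s
    · rw [Finset.sum_eq_single_of_mem k hk fun m _ hmk => by simpa using hterm m hmk]
      simp
    · rw [Finset.sum_eq_zero fun m hm => by simpa using hterm m (ne_of_mem_of_not_mem hm hk),
        hs k hk (v ≫ π k)]

theorem finSigmaFinEquiv_lt_of_fst_lt {I : ℕ} {n : Fin I → ℕ} {a b : (i : Fin I) × Fin (n i)}
    (h : a.1 < b.1) : finSigmaFinEquiv a < finSigmaFinEquiv b := by
  let N : ℕ → ℕ := fun k => if hk : k < I then n ⟨k, hk⟩ else 0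
  have hpartial : ∀ i : Fin I, ∑ k : Fin i, n (Fin.castLE i.2.le k) = ∑ k ∈ Finset.range i, N k :=
    fun i => by
      rw [← Fin.sum_univ_eq_sum_range]
      exact Finset.sum_congr rfl fun k _ => by simp [N, Fin.castLE, k.2.trans i.2]
  have hmono : ∑ k ∈ Finset.range (a.1 + 1), N k ≤ ∑ k ∈ Finset.range b.1, N k :=
    Finset.sum_le_sum_of_subset (Finset.range_subset_range.2 h)
  have ha : (a.2 : ℕ) < N a.1 := by simp [N, a.2.2]
  rw [Finset.sum_range_succ] at hmono
  rw [Fin.lt_def, finSigmaFinEquiv_apply, finSigmaFinEquiv_apply, hpartial, hpartial]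
  omega

noncomputable def blockMap {I : ℕ} (n : Fin I → ℕ) : Fin (∑ i, n i) →o Fin I where
  toFun q := (finSigmaFinEquiv.symm q).1
  monotone' q q' hq := by
    by_contra! hlt
    have := finSigmaFinEquiv_lt_of_fst_lt hlt
    simp only [Equiv.apply_symm_apply] at this
    exact absurd hq (not_le.2 this)

@[simp]
theorem blockMap_finSigmaFinEquiv {I : ℕ} (n : Fin I → ℕ) (s : (i : Fin I) × Fin (n i)) :
    blockMap n (finSigmaFinEquiv s) = s.1 :=
  congrArg Sigma.fst (finSigmaFinEquiv.symm_apply_apply s)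

theorem isBlockMap_blockMap {I : ℕ} (n : Fin I → ℕ) : IsBlockMap n (blockMap n) := by
  intro i
  have hfiber : (Finset.univ.filter fun q => blockMap n q = i) =
      Finset.univ.image fun a => finSigmaFinEquiv ⟨i, a⟩ := by
    ext q
    obtain ⟨⟨i', a⟩, rfl⟩ := finSigmaFinEquiv.surjective q
    simp only [Finset.mem_filter, Finset.mem_univ, true_and, Finset.mem_image,
      EmbeddingLike.apply_eq_iff_eq, blockMap_finSigmaFinEquiv]
    constructor
    · rintro rfl
      exact ⟨a, rfl⟩
    · rintro ⟨b, hb⟩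
      exact (congrArg Sigma.fst hb).symm
  rw [fiberCard, hfiber, Finset.card_image_of_injective _ fun a b hab => by simpa using hab,
    Finset.card_univ, Fintype.card_fin]

namespace ColaxSetting

variable (S : ColaxSetting V)

theorem tensHom_comp_eqToHom_comp_tensHom_assoc {I : ℕ} {A B : V} (hAB : A = B)
    {Y Z : Fin I → V} (f : ∀ i, Y i ⟶ B) (g : ∀ i, B ⟶ Z i)
    (h : S.tens (fun _ : Fin I => B) = S.tens fun _ => A) {W : V} (r : S.tens Z ⟶ W) :
    S.tensHom f ≫ eqToHom h ≫ S.tensHom (fun i => eqToHom hAB ≫ g i) ≫ r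
      = S.tensHom (fun i => f i ≫ g i) ≫ r := by
  subst hAB
  simp [S.tensHom_comp]

theorem tens_pow_eq_tens_fiber (X : V) {I : ℕ} (n : Fin I → ℕ) :
    S.tens (fun i => S.pow X (n i))
      = S.tens fun i => S.tens fun _ : Fin (fiberCard (blockMap n) i) => X := by
  congr 1
  funext i
  rw [isBlockMap_blockMap n i]
  rfl

/-- `λ^ψ : ⊗ᵢ X^{⊗nᵢ} ⟶ X^{⊗‖n‖}` for the block map `ψ : ⊔ᵢ nᵢ → I`. -/
noncomputable def powLam (X : V) {I : ℕ} (n : Fin I → ℕ) :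
    S.tens (fun i => S.pow X (n i)) ⟶ S.pow X (∑ i, n i) :=
  eqToHom (S.tens_pow_eq_tens_fiber X n) ≫ S.lam (blockMap n) fun _ => X

variable {S}

theorem Monoidal.isIso_lam (M : S.Monoidal) {I J : ℕ} (φ : Fin I →o Fin J) (X : Fin I → V) :
    IsIso (S.lam φ X) :=
  ⟨⟨M.lamInv φ X, M.lam_lamInv φ X, M.lamInv_lam φ X⟩⟩

theorem Monoidal.isIso_powLam (M : S.Monoidal) (X : V) {I : ℕ} (n : Fin I → ℕ) :
    IsIso (S.powLam X n) := by
  have := M.isIso_lam (blockMap n) fun _ => X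
  unfold powLam
  exact IsIso.comp_isIso' inferInstance this

end ColaxSetting

theorem TildeStr.pr_ext {S : ColaxSetting V} {X : V} (TX : TildeStr S X) {I : ℕ} {W : V}
    {u v : W ⟶ TX.T.obj I} (h : ∀ n, u ≫ TX.pr n = v ≫ TX.pr n) : u = v :=
  (TX.pr_univ fun n => v ≫ TX.pr n).unique h fun _ => rfl

noncomputable def HCoalgHom.invOfIsIso {S : ColaxSetting V} {C D : HCoalgebra S}
    (e : HCoalgHom C D) [∀ n, IsIso (e.app n)] : HCoalgHom D C where
  app n := inv (e.app n)
  naturality φ := by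
    rw [IsIso.inv_comp_eq, ← assoc, e.naturality φ, assoc, IsIso.hom_inv_id, comp_id]
  monoidality N := by
    rw [IsIso.eq_comp_inv, assoc, ← e.monoidality N, ← assoc, ← S.tensHom_comp]
    simp only [IsIso.inv_hom_id, S.tensHom_id, id_comp]

section Weight

variable [HasZeroMorphisms V] {S : ColaxSetting V} (G : Bigraded S) {X : V}

theorem Bigraded.eq_zero_of_lt_tens_pow (hX : ∀ (p : ℤ) (f : G.gen p 0 ⟶ X), f = 0)
    (M : S.Monoidal) {I : ℕ} {n : Fin I → ℕ} {p : ℤ}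
    {j : ℕ} (hj : j < ∑ i, n i) (f : G.gen p j ⟶ S.tens fun i => S.pow X (n i)) : f = 0 :=
  have := M.isIso_powLam X n
  zero_of_comp_mono (S.powLam X n) (G.tens_supp _ (fun _ => hX) p j hj (f ≫ S.powLam X n))

/-- Routing the zero factor through `X^{⊗(j+1)}` makes the composite factor through a tensor
product of weight `> j`. -/
theorem Bigraded.comp_tensHom_eq_zero (hX : ∀ (p : ℤ) (f : G.gen p 0 ⟶ X), f = 0)
    (M : S.Monoidal) {I : ℕ} {m k : Fin I → ℕ}
    (f : ∀ i, S.pow X (m i) ⟶ S.pow X (k i)) {i₀ : Fin I} (hf : f i₀ = 0) {p : ℤ} {j : ℕ}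
    (g : G.gen p j ⟶ S.tens fun i => S.pow X (m i)) : g ≫ S.tensHom f = 0 := by
  classical
  let m' := Function.update m i₀ (j + 1)
  have hm' : ∀ i, i ≠ i₀ → m i = m' i := fun i h => (Function.update_of_ne h _ _).symm
  let a : ∀ i, S.pow X (m i) ⟶ S.pow X (m' i) := fun i =>
    if h : i = i₀ then 0 else eqToHom (S.pow_eq X (hm' i h))
  let b : ∀ i, S.pow X (m' i) ⟶ S.pow X (k i) := fun i =>
    if h : i = i₀ then 0 else eqToHom (S.pow_eq X (hm' i h)).symm ≫ f i
  have hfactor : S.tensHom f = S.tensHom a ≫ S.tensHom b := by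
    rw [← S.tensHom_comp]
    congr 1
    funext i
    by_cases h : i = i₀
    · subst h
      simp [a, b, hf]
    · simp [a, b, h]
  have hweight : j < ∑ i, m' i :=
    calc j < m' i₀ := by simp [m']
      _ ≤ ∑ i, m' i := Finset.single_le_sum (fun _ _ => Nat.zero_le _) (Finset.mem_univ _)
  rw [hfactor, ← assoc, G.eq_zero_of_lt_tens_pow hX M hweight (g ≫ S.tensHom a), zero_comp]

theorem Bigraded.eq_zero_of_notMem_piFinset (hX : ∀ (p : ℤ) (f : G.gen p 0 ⟶ X), f = 0)
    {I : ℕ} {p : ℤ} {j : ℕ} {k : Fin I → ℕ}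
    (hk : k ∉ Fintype.piFinset fun _ => Finset.range (j + 1))
    (f : G.gen p j ⟶ S.pow X (∑ i, k i)) : f = 0 := by
  obtain ⟨i, hi⟩ := not_forall.1 (mt Fintype.mem_piFinset.2 hk)
  have hj : j < ∑ i, k i :=
    calc j < k i := by simpa using hi
      _ ≤ ∑ i, k i := Finset.single_le_sum (fun _ _ => Nat.zero_le _) (Finset.mem_univ _)
  exact G.tens_supp _ (fun _ => hX) p j hj f

end Weight

theorem statement_17 [Preadditive V] {S : ColaxSetting V} (M : S.Monoidal) (G : Bigraded S)
    (X : V)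
    -- `X^p_0 = 0`:
    (_ : ∀ (p : ℤ) (f : G.gen p 0 ⟶ X), f = 0)
    -- the tensor coalgebra `XT` with the cut comultiplication, as a homotopy coalgebra:
    (CX : TensorObj S X) (CTord : OrdCoalgebra S) (hpt : CTord.pt = CX.CT)
    (CTH : HCoalgebra S) (iCT : Induced CTord CTH)
    -- `X T̃`:
    (TX : TildeStr S X)
    -- in each bidegree, `XT^{⊗I}` is the direct sum of the components `X^{⊗‖n‖}`:
    (_ : ∀ (I : ℕ) (p : ℤ) (j : ℕ) (h3 : S.tens (fun _ : Fin I => CX.CT) = CTH.obj I)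
      (f : G.gen p j ⟶ CTH.obj I),
      ∃ (s : Finset (Fin I → ℕ)) (g : ∀ n : Fin I → ℕ,
          G.gen p j ⟶ S.tens (fun i => S.pow X (n i))),
        f = ∑ n ∈ s, g n ≫ S.tensHom (fun i => CX.inj (n i)) ≫ eqToHom h3)
    -- `e : XT → X T̃`, the homotopy coalgebra morphism with `e(I)·pr_n = (⊗ᵢpr_{nᵢ})·λ^ψ`:
    (e : HCoalgHom CTH TX.T)
    (_ : ∀ {I : ℕ} (n : Fin I → ℕ) (ψ : Fin (∑ i, n i) →o Fin I) (_ : IsBlockMap n ψ)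
      (h2 : S.tens (fun i => S.pow X (n i))
          = S.tens (fun i => S.tens (fun _ : Fin (fiberCard ψ i) => X))),
      e.app I ≫ TX.pr n
        = eqToHom (iCT.hobj I) ≫ S.tensHom (fun i => eqToHom hpt ≫ CX.prk (n i))
            ≫ eqToHom h2 ≫ S.lam ψ (fun _ => X)) :
    -- then `e` is an isomorphism of homotopy coalgebras:
    ∃ einv : HCoalgHom TX.T CTH,
      (∀ n : ℕ, e.app n ≫ einv.app n = 𝟙 (CTH.obj n)) ∧
      (∀ n : ℕ, einv.app n ≫ e.app n = 𝟙 (TX.T.obj n)) := by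
  rename_i hX hdecomp he
  have hobj : ∀ I, S.tens (fun _ : Fin I => CX.CT) = CTH.obj I := fun I => by
    rw [iCT.hobj, hpt]
  have hentry : ∀ {I : ℕ} (m k : Fin I → ℕ),
      S.tensHom (fun i => CX.inj (m i)) ≫ eqToHom (hobj I) ≫ e.app I ≫ TX.pr k
        = S.tensHom (fun i => CX.inj (m i) ≫ CX.prk (k i)) ≫ S.powLam X k := by
    intro I m k
    have hk : e.app I ≫ TX.pr k = eqToHom (iCT.hobj I)
        ≫ S.tensHom (fun i => eqToHom hpt ≫ CX.prk (k i)) ≫ S.powLam X k :=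
      he k _ (isBlockMap_blockMap k) (S.tens_pow_eq_tens_fiber X k)
    rw [hk, eqToHom_trans_assoc, S.tensHom_comp_eqToHom_comp_tensHom_assoc hpt]
  have hiso : ∀ I, IsIso (e.app I) := fun I => G.detect _ fun p j =>
    comp_bijective_of_diagonal (fun m => S.tensHom (fun i => CX.inj (m i)) ≫ eqToHom (hobj I))
      TX.pr (e.app I) (fun _ _ => TX.pr_ext)
      (fun m => by simpa [hentry, CX.inj_prk, S.tensHom_id] using M.isIso_powLam X m)
      (fun m k hmk g => by
        obtain ⟨i, hi⟩ := Function.ne_iff.1 hmk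
        rw [assoc, hentry, ← assoc, G.comp_tensHom_eq_zero hX M _ (CX.inj_prk_ne _ _ hi),
          zero_comp])
      (hdecomp I p j (hobj I)) ⟨_, fun _ hk => G.eq_zero_of_notMem_piFinset hX hk⟩
  exact ⟨e.invOfIsIso, fun n => IsIso.hom_inv_id _, fun n => IsIso.inv_hom_id _⟩

end Paper
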